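/- Let M be an L_n-structure, A a finite substructure with A ≤ M (i.e., δ(X/A) ≥ 0 for all finite A ⊆ X ⊆ M, where δ(X) = |X| - |R^X|). Suppose x̄₁, ..., x̄_k are distinct r-tuples from A with k ≥ s = n - r + 1, and ȳ is an (s-1)-tuple in M with (ȳ, x̄_i) ∈ R^M for all i ≤ k. Then all elements of ȳ lie in A. -/

import Mathlib

/-!
Adjoining the at most `s - 1` new points of `ȳ` to `A` adds at most `s - 1` to the size, but it
adds the `k ≥ s` new relations `(ȳ, x̄ⱼ)`, which were not in `R^A` because some `yᵢ ∉ A`. Hence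
`δ(A ∪ ȳ) < δ(A)`, contradicting `A ≤ M`.
-/

namespace Predimension

variable {α ι κ : Type*} [DecidableEq α] [Fintype ι] [Fintype κ]

/-- The paper's `R^X`. -/
def relOn (R : Finset ((ι → α) × (κ → α))) (X : Finset α) : Finset ((ι → α) × (κ → α)) :=
  R.filter fun p => (∀ i, p.1 i ∈ X) ∧ (∀ i, p.2 i ∈ X)

/-- The paper's `δ(X)`. -/
def predim (R : Finset ((ι → α) × (κ → α))) (X : Finset α) : ℤ :=
  X.card - (relOn R X).card

theorem relOn_mono (R : Finset ((ι → α) × (κ → α))) {A X : Finset α} (hAX : A ⊆ X) :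
    relOn R A ⊆ relOn R X :=
  Finset.monotone_filter_right R fun _ _ h => ⟨fun i => hAX (h.1 i), fun i => hAX (h.2 i)⟩

theorem card_relOn_add_le {R : Finset ((ι → α) × (κ → α))} {A X : Finset α} (hAX : A ⊆ X)
    {k : ℕ} {x : Fin k → κ → α} (hxinj : Function.Injective x) (hxA : ∀ j i, x j i ∈ A)
    {y : ι → α} (hyX : ∀ i, y i ∈ X) (hyA : ∃ i, y i ∉ A) (hy : ∀ j, (y, x j) ∈ R) :
    (relOn R A).card + k ≤ (relOn R X).card := by
  set N := Finset.univ.image fun j => (y, x j)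
  have hNcard : N.card = k := by
    rw [Finset.card_image_of_injective _ fun a b hab => hxinj (congrArg Prod.snd hab)]
    exact Finset.card_fin k
  have hdisj : Disjoint (relOn R A) N := by
    refine Finset.disjoint_right.2 fun p hpN hpA => ?_
    obtain ⟨j, -, rfl⟩ := Finset.mem_image.1 hpN
    obtain ⟨i, hi⟩ := hyA
    exact hi ((Finset.mem_filter.1 hpA).2.1 i)
  have hNX : N ⊆ relOn R X := by
    rintro _ hp
    obtain ⟨j, -, rfl⟩ := Finset.mem_image.1 hp
    exact Finset.mem_filter.2 ⟨hy j, hyX, fun i => hAX (hxA j i)⟩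
  calc (relOn R A).card + k = (relOn R A ∪ N).card := by
        rw [Finset.card_union_of_disjoint hdisj, hNcard]
    _ ≤ (relOn R X).card := Finset.card_le_card (Finset.union_subset (relOn_mono R hAX) hNX)

theorem predim_union_image_lt {R : Finset ((ι → α) × (κ → α))} {A : Finset α}
    {k : ℕ} (hk : Fintype.card ι < k) {x : Fin k → κ → α} (hxinj : Function.Injective x)
    (hxA : ∀ j i, x j i ∈ A) {y : ι → α} (hyA : ∃ i, y i ∉ A) (hy : ∀ j, (y, x j) ∈ R) :
    predim R (A ∪ Finset.univ.image y) < predim R A := by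
  have hcard : (A ∪ Finset.univ.image y).card ≤ A.card + Fintype.card ι :=
    (Finset.card_union_le _ _).trans (Nat.add_le_add_left Finset.card_image_le _)
  have hrel := card_relOn_add_le Finset.subset_union_left hxinj hxA
    (fun i => Finset.mem_union_right _ (Finset.mem_image_of_mem y (Finset.mem_univ i))) hyA hy
  unfold predim
  omega

end Predimension

open Predimension in
theorem stmt_12_general {α : Type*} [DecidableEq α] (r s : ℕ)
    (R : Finset ((Fin (s - 1) → α) × (Fin r → α)))
    (A : Finset α)
    (hstrong : ∀ X : Finset α, A ⊆ X →
      0 ≤ ((X.card : ℤ) -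
          ((R.filter fun p => (∀ i, p.1 i ∈ X) ∧ (∀ i, p.2 i ∈ X)).card : ℤ)) -
        ((A.card : ℤ) -
          ((R.filter fun p => (∀ i, p.1 i ∈ A) ∧ (∀ i, p.2 i ∈ A)).card : ℤ)))
    (k : ℕ) (hk : s ≤ k)
    (x : Fin k → (Fin r → α)) (hxinj : Function.Injective x)
    (hxA : ∀ j i, x j i ∈ A)
    (y : Fin (s - 1) → α) (hy : ∀ j, (y, x j) ∈ R) :
    ∀ i, y i ∈ A := by
  intro i0
  by_contra hyi
  have hks : Fintype.card (Fin (s - 1)) < k := by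
    rw [Fintype.card_fin]
    have := i0.pos
    omega
  have hlt := predim_union_image_lt hks hxinj hxA ⟨i0, hyi⟩ hy
  have hge : 0 ≤ predim R (A ∪ Finset.univ.image y) - predim R A := by
    unfold predim relOn
    -- only the decidability instances of `∀ i : Fin _` differ
    convert hstrong _ Finset.subset_union_left using 6
  omega

/-- If `A ≤ M` (strong, with respect to `δ(X) = |X| - |R^X|`), `x̄₁, …, x̄_k` are
distinct `r`-tuples from `A` with `k ≥ s`, and `ȳ` is an `(s-1)`-tuple of `M` with
`(ȳ, x̄_j) ∈ R` for all `j`, then every element of `ȳ` lies in `A`. -/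
theorem stmt_12 {α : Type*} [DecidableEq α] (n r s : ℕ)
    (hn : 2 ≤ n) (hr : 0 < r) (hrn : r < n) (hs : s = n - r + 1)
    (R : Finset ((Fin (s - 1) → α) × (Fin r → α)))
    (A : Finset α)
    (hstrong : ∀ X : Finset α, A ⊆ X →
      0 ≤ ((X.card : ℤ) -
          ((R.filter fun p => (∀ i, p.1 i ∈ X) ∧ (∀ i, p.2 i ∈ X)).card : ℤ)) -
        ((A.card : ℤ) -
          ((R.filter fun p => (∀ i, p.1 i ∈ A) ∧ (∀ i, p.2 i ∈ A)).card : ℤ)))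
    (k : ℕ) (hk : s ≤ k)
    (x : Fin k → (Fin r → α)) (hxinj : Function.Injective x)
    (hxA : ∀ j i, x j i ∈ A)
    (y : Fin (s - 1) → α) (hy : ∀ j, (y, x j) ∈ R) :
    ∀ i, y i ∈ A :=
  stmt_12_general r s R A hstrong k hk x hxinj hxA y hy
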